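/- Stability of well-separating hyperplanes: Let T ⊆ ℝⁿ, ρ, ε > 0 with ε ≤ ρ/4, and κ > 0. Let a_1,…,a_m ∈ ℝⁿ, τ_1,…,τ_m, ν_1,…,ν_m ∈ ℝ. For x, z ∈ T, say index i ∈ [m] is κ-well-separating for (x, z) if sign(⟨a_i,x⟩+τ_i+ν_i) ≠ sign(⟨a_i,z⟩+τ_i), |⟨a_i,x⟩+τ_i+ν_i| ≥ κ‖x−z‖₂ and |⟨a_i,z⟩+τ_i| ≥ κ‖x−z‖₂; let I(x,z,κ) be the set of such indices. Then for all x, z, x′, z′ ∈ T with ‖x′−z′‖₂ ≥ ρ, ‖x−x′‖₂ ≤ ε and ‖z−z′‖₂ ≤ ε: |I(x,z,κ/2)| ≥ |I(x′,z′,κ)| − 2·sup_{y ∈ (T−T) ∩ εB₂ⁿ} |{i ∈ [m] : |⟨a_i,y⟩| > κρ/4}|. -/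

import Mathlib

/-!
Moving `x'` to `x` changes `⟪a i, ·⟫` by `⟪a i, x - x'⟫`, and `x - x'` lies in `(T - T) ∩ ε B`;
so for all but at most twice the supremum many indices both inner products move by at most `κρ/4`.
For such an index, separating for `(x', z')` with margin `κ‖x' - z'‖ ≥ κρ`, the perturbation
keeps both signs and leaves a margin `κ‖x' - z'‖ - κρ/4`, which dominates
`(κ/2)‖x - z‖ ≤ (κ/2)(‖x' - z'‖ + 2ε)` because `ε ≤ ρ/4`.
-/

open scoped BigOperators Pointwise

noncomputable def rsign (t : ℝ) : ℝ := if 0 ≤ t then 1 else -1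

/-- The set of indices of κ-well-separating hyperplanes for the pair (x, z). -/
noncomputable def sepSet {n m : ℕ} (a : Fin m → EuclideanSpace ℝ (Fin n))
    (τ ν : Fin m → ℝ) (x z : EuclideanSpace ℝ (Fin n)) (κ : ℝ) : Finset (Fin m) :=
  Finset.univ.filter fun i =>
    rsign ((inner ℝ (a i) x : ℝ) + τ i + ν i) ≠ rsign ((inner ℝ (a i) z : ℝ) + τ i) ∧
    κ * ‖x - z‖ ≤ |(inner ℝ (a i) x : ℝ) + τ i + ν i| ∧
    κ * ‖x - z‖ ≤ |(inner ℝ (a i) z : ℝ) + τ i|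

open Finset

lemma rsign_add_of_abs_lt {u d : ℝ} (h : |d| < |u|) : rsign (u + d) = rsign u := by
  rcases le_or_gt 0 u with hu | hu
  · rw [abs_of_nonneg hu] at h
    have : 0 ≤ u + d := by linarith [neg_abs_le d]
    simp [rsign, this, hu]
  · rw [abs_of_neg hu] at h
    have : ¬ 0 ≤ u + d := by linarith [le_abs_self d]
    simp [rsign, this, not_le.mpr hu]

lemma half_mul_le_abs_add {κ ρ D u d : ℝ} (hκ : 0 ≤ κ) (hD : ρ ≤ D) (hu : κ * D ≤ |u|)
    (hd : |d| ≤ κ * ρ / 4) : κ / 2 * (D + ρ / 2) ≤ |u + d| := by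
  have : κ * ρ ≤ κ * D := mul_le_mul_of_nonneg_left hD hκ
  linarith [abs_sub_abs_le_abs_add u d]

section WellSeparating

variable {n m : ℕ} (a : Fin m → EuclideanSpace ℝ (Fin n))

noncomputable def largeInner (t : ℝ) (y : EuclideanSpace ℝ (Fin n)) : Finset (Fin m) :=
  univ.filter fun i => t < |(inner ℝ (a i) y : ℝ)|

lemma card_largeInner_le_iSup (t : ℝ) {S : Set (EuclideanSpace ℝ (Fin n))} {y} (hy : y ∈ S) :
    #(largeInner a t y) ≤ ⨆ y : {y // y ∈ S}, #(largeInner a t y) := by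
  refine le_ciSup (f := fun y : {y // y ∈ S} => #(largeInner a t y)) ⟨m, ?_⟩ ⟨y, hy⟩
  rintro _ ⟨y, rfl⟩
  exact (card_filter_le _ _).trans_eq (card_fin m)

variable (τ ν : Fin m → ℝ) {x z x' z' : EuclideanSpace ℝ (Fin n)} {κ ρ : ℝ}

lemma mem_sepSet_half_of_mem (hκ : 0 < κ) (hρ : 0 < ρ) (hsep : ρ ≤ ‖x' - z'‖)
    (hxz : ‖x - z‖ ≤ ‖x' - z'‖ + ρ / 2) {i : Fin m} (hi : i ∈ sepSet a τ ν x' z' κ)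
    (hix : i ∉ largeInner a (κ * ρ / 4) (x - x'))
    (hiz : i ∉ largeInner a (κ * ρ / 4) (z - z')) :
    i ∈ sepSet a τ ν x z (κ / 2) := by
  simp only [sepSet, largeInner, mem_filter, mem_univ, true_and, not_lt] at hi hix hiz ⊢
  obtain ⟨hsign, hux, huz⟩ := hi
  have hx : (inner ℝ (a i) x : ℝ) + τ i + ν i =
      ((inner ℝ (a i) x' : ℝ) + τ i + ν i) + inner ℝ (a i) (x - x') := by
    rw [inner_sub_right]; ring
  have hz : (inner ℝ (a i) z : ℝ) + τ i =
      ((inner ℝ (a i) z' : ℝ) + τ i) + inner ℝ (a i) (z - z') := by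
    rw [inner_sub_right]; ring
  have hκρ : κ * ρ ≤ κ * ‖x' - z'‖ := mul_le_mul_of_nonneg_left hsep hκ.le
  have hmargin : κ / 2 * ‖x - z‖ ≤ κ / 2 * (‖x' - z'‖ + ρ / 2) :=
    mul_le_mul_of_nonneg_left hxz (by positivity)
  have hpos : 0 < κ * ρ := mul_pos hκ hρ
  rw [hx, hz]
  refine ⟨?_, ?_, ?_⟩
  · rwa [rsign_add_of_abs_lt (d := inner ℝ (a i) (x - x')) (by linarith),
      rsign_add_of_abs_lt (d := inner ℝ (a i) (z - z')) (by linarith)]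
  · exact hmargin.trans (half_mul_le_abs_add hκ.le hsep hux hix)
  · exact hmargin.trans (half_mul_le_abs_add hκ.le hsep huz hiz)

lemma card_sepSet_le_card_sepSet_half_add (hκ : 0 < κ) (hρ : 0 < ρ) (hsep : ρ ≤ ‖x' - z'‖)
    (hxz : ‖x - z‖ ≤ ‖x' - z'‖ + ρ / 2) :
    #(sepSet a τ ν x' z' κ) ≤ #(sepSet a τ ν x z (κ / 2)) +
      #(largeInner a (κ * ρ / 4) (x - x')) + #(largeInner a (κ * ρ / 4) (z - z')) := by
  have hsub : sepSet a τ ν x' z' κ ⊆ sepSet a τ ν x z (κ / 2) ∪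
      largeInner a (κ * ρ / 4) (x - x') ∪ largeInner a (κ * ρ / 4) (z - z') := by
    intro i hi
    by_contra hnot
    simp only [mem_union, not_or] at hnot
    exact hnot.1.1 (mem_sepSet_half_of_mem a τ ν hκ hρ hsep hxz hi hnot.1.2 hnot.2)
  exact (card_le_card hsub).trans <|
    (card_union_le _ _).trans (Nat.add_le_add_right (card_union_le _ _) _)

end WellSeparating

theorem stability_of_well_separating_hyperplanes_general (n m : ℕ)
    (T : Set (EuclideanSpace ℝ (Fin n))) (ρ ε κ : ℝ)
    (hρ : 0 < ρ) (hερ : ε ≤ ρ / 4) (hκ : 0 < κ)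
    (a : Fin m → EuclideanSpace ℝ (Fin n)) (τ ν : Fin m → ℝ)
    (x z x' z' : EuclideanSpace ℝ (Fin n))
    (hx : x ∈ T) (hz : z ∈ T) (hx' : x' ∈ T) (hz' : z' ∈ T)
    (hsep : ρ ≤ ‖x' - z'‖) (hxx : ‖x - x'‖ ≤ ε) (hzz : ‖z - z'‖ ≤ ε) :
    ((sepSet a τ ν x' z' κ).card : ℤ) -
        2 * (⨆ y : {y : EuclideanSpace ℝ (Fin n) //
                y ∈ (T - T) ∩ Metric.closedBall 0 ε},
              (Finset.univ.filter fun i : Fin m =>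
                κ * ρ / 4 < |(inner ℝ (a i) (y : EuclideanSpace ℝ (Fin n)) : ℝ)|).card : ℕ) ≤
      ((sepSet a τ ν x z (κ / 2)).card : ℤ) := by
  have hxz : ‖x - z‖ ≤ ‖x' - z'‖ + ρ / 2 := by
    have := dist_triangle4 x x' z' z
    rw [dist_comm z'] at this
    simp only [dist_eq_norm] at this
    linarith
  have hx_mem : x - x' ∈ (T - T) ∩ Metric.closedBall 0 ε :=
    ⟨Set.sub_mem_sub hx hx', by simpa [dist_eq_norm] using hxx⟩
  have hz_mem : z - z' ∈ (T - T) ∩ Metric.closedBall 0 ε :=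
    ⟨Set.sub_mem_sub hz hz', by simpa [dist_eq_norm] using hzz⟩
  have := card_sepSet_le_card_sepSet_half_add a τ ν hκ hρ hsep hxz
  have := card_largeInner_le_iSup a (κ * ρ / 4) hx_mem
  have := card_largeInner_le_iSup a (κ * ρ / 4) hz_mem
  unfold largeInner at *
  omega

theorem stability_of_well_separating_hyperplanes (n m : ℕ)
    (T : Set (EuclideanSpace ℝ (Fin n))) (ρ ε κ : ℝ)
    (hρ : 0 < ρ) (hε : 0 < ε) (hερ : ε ≤ ρ / 4) (hκ : 0 < κ)
    (a : Fin m → EuclideanSpace ℝ (Fin n)) (τ ν : Fin m → ℝ)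
    (x z x' z' : EuclideanSpace ℝ (Fin n))
    (hx : x ∈ T) (hz : z ∈ T) (hx' : x' ∈ T) (hz' : z' ∈ T)
    (hsep : ρ ≤ ‖x' - z'‖) (hxx : ‖x - x'‖ ≤ ε) (hzz : ‖z - z'‖ ≤ ε) :
    ((sepSet a τ ν x' z' κ).card : ℤ) -
        2 * (⨆ y : {y : EuclideanSpace ℝ (Fin n) //
                y ∈ (T - T) ∩ Metric.closedBall 0 ε},
              (Finset.univ.filter fun i : Fin m =>
                κ * ρ / 4 < |(inner ℝ (a i) (y : EuclideanSpace ℝ (Fin n)) : ℝ)|).card : ℕ) ≤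
      ((sepSet a τ ν x z (κ / 2)).card : ℤ) :=
  stability_of_well_separating_hyperplanes_general n m T ρ ε κ hρ hερ hκ a τ ν x z x' z' hx hz hx'
    hz' hsep hxx hzz
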